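/- Let Λ be a ring with a direct sum decomposition Λ = P ⊕ Q as right Λ-modules, and let f : B → P be a right (add Q)-approximation of P. If there exists a nonzero Λ-linear map u : P → Λ with u ∘ f = 0, then Hom_{K(Mod Λ)}(P*[1], Λ[0]) ≠ 0. (Hence the sufficient condition guaranteeing that the right tilting mutation Λ/P ⊕ P* is a tilting complex fails; this is the paper's criterion that tilting mutation at a vertex i is not possible when there is a nonzero path ending in i whose composition with every arrow out of i is zero.) -/

import Mathlib

open CategoryTheory CategoryTheory.Limits

variable {Λ : Type} [Ring Λ]

/-- The category of right `Λ`-modules, as left modules over `Λᵐᵒᵖ`. -/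
abbrev RMod (Λ : Type) [Ring Λ] := ModuleCat Λᵐᵒᵖ

/-- `Λ` as a right module over itself. -/
abbrev regR (Λ : Type) [Ring Λ] : RMod Λ := ModuleCat.of Λᵐᵒᵖ Λ

/-- The graded pieces of a two-term complex concentrated in degrees 0 and 1. -/
def tX (B P : RMod Λ) : ℤ → RMod Λ
  | 0 => B
  | 1 => P
  | _ => ModuleCat.of Λᵐᵒᵖ PUnit

lemma tX0 (B P : RMod Λ) : tX B P 0 = B := rfl
lemma tX1 (B P : RMod Λ) : tX B P 1 = P := rfl

/-- The two-term cochain complex `P*` with `B` in degree 0, `P` in degree 1,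
differential `f`, and zeros elsewhere. -/
def twoTerm {B P : RMod Λ} (f : B ⟶ P) : CochainComplex (RMod Λ) ℤ where
  X := tX B P
  d i j := if h : i = 0 ∧ j = 1 then
      (eqToHom (by rw [h.1, tX0]) : tX B P i ⟶ B) ≫ f ≫
        (eqToHom (by rw [h.2, tX1]) : P ⟶ tX B P j)
    else 0
  shape i j hij := by
    try dsimp only
    rw [dif_neg]
    rintro ⟨rfl, rfl⟩
    exact hij rfl
  d_comp_d' i j k _ _ := by
    try dsimp only
    by_cases h : i = 0 ∧ j = 1
    · obtain ⟨rfl, rfl⟩ := h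
      rw [dif_neg (by rintro ⟨h1, -⟩; exact one_ne_zero h1 : ¬((1:ℤ) = 0 ∧ k = 1)), comp_zero]
    · rw [dif_neg h, zero_comp]

/-- The complex `M[0]`, with `M` concentrated in degree 0. -/
def sgl (M : RMod Λ) : CochainComplex (RMod Λ) ℤ := twoTerm (0 : M ⟶ ModuleCat.of Λᵐᵒᵖ PUnit)

/-- The homotopy category `K(Mod Λ)` of cochain complexes of right `Λ`-modules. -/
abbrev KMod (Λ : Type) [Ring Λ] := HomotopyCategory (RMod Λ) (ComplexShape.up ℤ)

/-- The quotient functor from complexes to the homotopy category. -/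
abbrev Kq : CochainComplex (RMod Λ) ℤ ⥤ KMod Λ := HomotopyCategory.quotient _ _

/-- The chain map `π : P* ⟶ B[0]` given by the identity of `B` in degree 0. -/
def projB {B P : RMod Λ} (f : B ⟶ P) : twoTerm f ⟶ sgl B where
  f i := if h : i = 0 then eqToHom (by rw [h]; rfl) else 0
  comm' i j hij := by
    try dsimp only
    by_cases h : i = 0
    · subst h
      obtain rfl : j = 1 := by simpa using hij.symm
      simp [twoTerm, sgl]
      all_goals first | rfl | exact comp_zero.symm | exact zero_comp.symm | (ext; rfl) | simp
    · rw [dif_neg h, zero_comp]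
      have hn : ¬(i = 0 ∧ j = 1) := fun hc => h hc.1
      simp [twoTerm, dif_neg hn]
      all_goals first | rfl | exact comp_zero.symm | exact zero_comp.symm | (ext; rfl) | simp

/-- The chain map `B[0] ⟶ P[0]` induced by `f : B ⟶ P`. -/
def sglMap {B P : RMod Λ} (f : B ⟶ P) : sgl B ⟶ sgl P where
  f i := if h : i = 0 then eqToHom (by rw [h]; rfl) ≫ f ≫ eqToHom (by rw [h]; rfl) else 0
  comm' i j hij := by
    try dsimp only
    by_cases h : i = 0
    · subst h
      obtain rfl : j = 1 := by simpa using hij.symm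
      simp [sgl, twoTerm]
      all_goals first | rfl | exact comp_zero.symm | exact zero_comp.symm | (ext; rfl) | simp
    · rw [dif_neg h, zero_comp]
      have hn : ¬(i = 0 ∧ j = 1) := fun hc => h hc.1
      simp [sgl, twoTerm, dif_neg hn]
      all_goals first | rfl | exact comp_zero.symm | exact zero_comp.symm | (ext; rfl) | simp

/-- `M` is in `add X`: it is a direct summand of a finite direct sum of copies of `X`. -/
def memAdd (X M : RMod Λ) : Prop :=
  ∃ (t : ℕ) (s : M ⟶ ⨁ (fun _ : Fin t => X)) (r : (⨁ (fun _ : Fin t => X)) ⟶ M),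
    s ≫ r = 𝟙 M

/-- `f : B ⟶ P` is a right `add X`-approximation of `P`. -/
def IsRightApprox (X : RMod Λ) {B P : RMod Λ} (f : B ⟶ P) : Prop :=
  memAdd X B ∧ ∀ B' : RMod Λ, memAdd X B' → ∀ g : B' ⟶ P, ∃ h : B' ⟶ B, h ≫ f = g

/-- `f : B ⟶ P` is right minimal. -/
def RightMinimal {B P : RMod Λ} (f : B ⟶ P) : Prop :=
  ∀ h : B ⟶ B, h ≫ f = f → IsIso h

/-- The graded pieces of the mapping cone: `B` in degree `-1`, `P` in degree `0`. -/
def cXdeg (B P : RMod Λ) : ℤ → RMod Λ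
  | -1 => B
  | 0 => P
  | _ => ModuleCat.of Λᵐᵒᵖ PUnit

lemma cX0 (B P : RMod Λ) : cXdeg B P 0 = P := rfl
lemma cXm1 (B P : RMod Λ) : cXdeg B P (-1) = B := rfl

/-- The mapping cone `P*[1]` of `f : B ⟶ P`: `B` in degree `-1`, `P` in degree `0`,
with differential `f`. -/
def coneC {B P : RMod Λ} (f : B ⟶ P) : CochainComplex (RMod Λ) ℤ where
  X := cXdeg B P
  d i j := if h : i = -1 ∧ j = 0 then
      (eqToHom (by rw [h.1, cXm1]) : cXdeg B P i ⟶ B) ≫ f ≫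
        (eqToHom (by rw [h.2, cX0]) : P ⟶ cXdeg B P j)
    else 0
  shape i j hij := by
    try dsimp only
    rw [dif_neg]
    rintro ⟨rfl, rfl⟩
    exact hij rfl
  d_comp_d' i j k _ _ := by
    try dsimp only
    by_cases h : i = -1 ∧ j = 0
    · obtain ⟨rfl, rfl⟩ := h
      rw [dif_neg (by rintro ⟨h1, -⟩; exact (by norm_num : (0:ℤ) ≠ -1) h1 :
          ¬((0:ℤ) = -1 ∧ k = 0)), comp_zero]
    · rw [dif_neg h, zero_comp]

/-! A map `u : P ⟶ M` killed by `f` is a chain map `P*[1] ⟶ M[0]` living in degree 0. The degree-0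
component of a null-homotopy is `d ∘ h + h ∘ d`, and both differentials involved vanish
(`P*[1]` has nothing in degree 1, `M[0]` nothing in degree -1), so the chain map is zero in
`K(Mod Λ)` only if `u = 0`. -/

lemma Homotopy.f_eq_zero_of_d_eq_zero {C ι : Type*} [Category C] [Preadditive C]
    {c : ComplexShape ι} {K L : HomologicalComplex C c} {φ : K ⟶ L} (H : Homotopy φ 0) (i : ι)
    (hK : K.d i (c.next i) = 0) (hL : L.d (c.prev i) i = 0) : φ.f i = 0 := by
  simpa [dNext, prevD, hK, hL] using H.comm i

lemma coneC_d_eq_zero {B P : RMod Λ} (f : B ⟶ P) {i : ℤ} (j : ℤ) (hi : i ≠ -1) :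
    (coneC f).d i j = 0 :=
  dif_neg fun h => hi h.1

lemma sgl_d_eq_zero (M : RMod Λ) {i : ℤ} (j : ℤ) (hi : i ≠ 0) : (sgl M).d i j = 0 :=
  dif_neg fun h => hi h.1

def coneDescSgl {B P M : RMod Λ} (f : B ⟶ P) (u : P ⟶ M) (huf : f ≫ u = 0) :
    coneC f ⟶ sgl M where
  f
    | 0 => u
    | _ => 0
  comm' i j hij := by
    obtain rfl : j = i + 1 := hij.symm
    by_cases hi : i = -1
    · subst hi
      exact zero_comp.trans huf.symm
    rw [coneC_d_eq_zero f _ hi, zero_comp]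
    by_cases hi' : i = 0
    · subst hi'
      exact comp_zero
    · rw [sgl_d_eq_zero M _ hi', comp_zero]

theorem mutation_obstruction_general
    (Λ : Type) [Ring Λ] (P B : RMod Λ)
    (f : B ⟶ P)
    (u : P ⟶ regR Λ) (hu : u ≠ 0) (huf : f ≫ u = 0) :
    ∃ g : (Kq).obj (coneC f) ⟶ (Kq).obj (sgl (regR Λ)), g ≠ 0 := by
  refine ⟨(Kq).map (coneDescSgl f u huf), fun hg => hu ?_⟩
  have H : Homotopy (coneDescSgl f u huf) 0 :=
    HomotopyCategory.homotopyOfEq _ _ (hg.trans ((Kq).map_zero _ _).symm)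
  exact H.f_eq_zero_of_d_eq_zero 0 (coneC_d_eq_zero f _ (by norm_num))
    (sgl_d_eq_zero _ _ (by norm_num))

/-- Let `Λ = P ⊕ Q` as right `Λ`-modules and `f : B ⟶ P` a right
`add Q`-approximation of `P`. If there is a nonzero `u : P ⟶ Λ` with `u ∘ f = 0`, then
`Hom_{K(Mod Λ)}(P*[1], Λ[0]) ≠ 0`, so the sufficient condition guaranteeing that the right
tilting mutation `Λ/P ⊕ P*` is a tilting complex fails. -/
theorem mutation_obstruction
    (Λ : Type) [Ring Λ] (P Q B : RMod Λ)
    (decomp : regR Λ ≅ P ⊞ Q)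
    (f : B ⟶ P) (happrox : IsRightApprox Q f)
    (u : P ⟶ regR Λ) (hu : u ≠ 0) (huf : f ≫ u = 0) :
    ∃ g : (Kq).obj (coneC f) ⟶ (Kq).obj (sgl (regR Λ)), g ≠ 0 :=
  mutation_obstruction_general Λ P B f u hu huf
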